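/- Joint continuity in (p, π): for probability measures μ, ν on ℝ with finite first moment, the map (p, π) ↦ ∫∫ |y−x|^p dπ(x,y) is continuous on (0,1] × Marg(μ,ν), where Marg(μ,ν) carries the weak topology. -/

import Mathlib

open MeasureTheory Filter Topology Set BoundedContinuousFunction

/-!
Truncate the cost at level `n`. The truncated cost `(p, π) ↦ ∫ min(|y - x|, n) ^ p dπ` is jointly
continuous on `(0, ∞) × 𝒫(ℝ²)`: by uniform continuity of `(p, t) ↦ t ^ p` on a compact rectangle,
`p ↦ min(|y - x|, n) ^ p` is continuous for the sup norm, and at fixed `p` the integrand is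
bounded and continuous. The truncation error is at most `∫_{|y - x| > n} |y - x| dπ`, and since
`|y - x| > n` forces `|x|` or `|y|` above `n / 2`, it is controlled by the tails of `μ` and `ν`
alone, uniformly over all couplings. A uniform limit of continuous functions is continuous.
-/

lemma rpow_le_one_add {t p : ℝ} (ht : 0 ≤ t) (hp : 0 ≤ p) (hp1 : p ≤ 1) : t ^ p ≤ 1 + t := by
  rcases le_total t 1 with ht1 | ht1
  · linarith [Real.rpow_le_one ht ht1 hp]
  · linarith [Real.rpow_le_self_of_one_le ht1 hp1]

lemma rpow_sub_min_rpow_le_indicator {t n p : ℝ} (hn : 1 ≤ n) (hp : p ≤ 1) :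
    t ^ p - min t n ^ p ≤ (Ioi n).indicator id t := by
  rcases le_or_gt t n with htn | hnt
  · simp [min_eq_left htn, indicator_of_notMem (show t ∉ Ioi n from not_lt.2 htn)]
  · rw [min_eq_right hnt.le, indicator_of_mem (mem_Ioi.2 hnt), id]
    have hn0 : 0 ≤ n ^ p := Real.rpow_nonneg (by linarith) p
    linarith [Real.rpow_le_self_of_one_le (hn.trans hnt.le) hp]

lemma indicator_Ioi_le_of_le_add {t a b : ℝ} (r : ℝ) (ha : 0 ≤ a) (hb : 0 ≤ b)
    (h : t ≤ a + b) :
    (Ioi r).indicator id t ≤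
      2 * ((Ioi (r / 2)).indicator id a + (Ioi (r / 2)).indicator id b) := by
  have ha' : 0 ≤ (Ioi (r / 2)).indicator id a := indicator_nonneg (fun _ _ => ha) a
  have hb' : 0 ≤ (Ioi (r / 2)).indicator id b := indicator_nonneg (fun _ _ => hb) b
  by_cases hrt : r < t
  · rw [indicator_of_mem (mem_Ioi.2 hrt), id]
    rcases le_total a b with hab | hab
    · rw [indicator_of_mem (show b ∈ Ioi (r / 2) from mem_Ioi.2 (by linarith)), id]
      linarith
    · rw [indicator_of_mem (show a ∈ Ioi (r / 2) from mem_Ioi.2 (by linarith)), id]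
      linarith
  · rw [indicator_of_notMem (show t ∉ Ioi r from hrt)]
    positivity

lemma tendstoUniformlyOn_rpow_Icc {p₀ : ℝ} (hp₀ : 0 < p₀) (n : ℝ) :
    TendstoUniformlyOn (fun p t : ℝ => t ^ p) (fun t => t ^ p₀) (𝓝 p₀) (Icc 0 n) := by
  have hU : Icc (p₀ / 2) (2 * p₀) ∈ 𝓝 p₀ := Icc_mem_nhds (by linarith) (by linarith)
  have hcont : ContinuousOn (↿fun p t : ℝ => t ^ p) (Icc (p₀ / 2) (2 * p₀) ×ˢ Icc 0 n) :=
    fun q hq => (continuousAt_snd.rpow continuousAt_fst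
      (Or.inr (by linarith [hq.1.1]))).continuousWithinAt
  have := ((isCompact_Icc.prod isCompact_Icc).uniformContinuousOn_of_continuous
    hcont).tendstoUniformlyOn (x := p₀) (mem_of_mem_nhds hU)
  rwa [nhdsWithin_eq_nhds.2 hU] at this

section Integrals

variable {Ω : Type*} [MeasurableSpace Ω]

lemma measurable_indicator_Ioi_id (r : ℝ) : Measurable ((Ioi r).indicator id : ℝ → ℝ) :=
  measurable_id.indicator measurableSet_Ioi

lemma MeasureTheory.Integrable.indicator_Ioi_id_comp {μ : Measure Ω} {f : Ω → ℝ}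
    (hf : Integrable f μ) (r : ℝ) :
    Integrable (fun ω => (Ioi r).indicator id (f ω)) μ :=
  hf.mono ((measurable_indicator_Ioi_id r).comp_aemeasurable hf.aemeasurable).aestronglyMeasurable
    (ae_of_all _ fun ω => norm_indicator_le_norm_self id (f ω))

lemma tendsto_integral_indicator_Ioi_atTop {μ : Measure Ω} {f : Ω → ℝ} (hf : Integrable f μ) :
    Tendsto (fun r => ∫ ω, (Ioi r).indicator id (f ω) ∂μ) atTop (𝓝 0) := by
  rw [← integral_zero Ω ℝ]
  refine tendsto_integral_filter_of_dominated_convergence (fun ω => ‖f ω‖)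
    (Eventually.of_forall fun r =>
      ((measurable_indicator_Ioi_id r).comp_aemeasurable hf.aemeasurable).aestronglyMeasurable)
    (Eventually.of_forall fun r => Eventually.of_forall fun ω => ?_) hf.norm
    (Eventually.of_forall fun ω => tendsto_const_nhds.congr' ?_)
  · exact norm_indicator_le_norm_self id (f ω)
  · filter_upwards [eventually_ge_atTop (f ω)] with r hr
    exact (indicator_of_notMem (show f ω ∉ Ioi r from not_lt.2 hr) _).symm

lemma dist_integral_le_of_forall_dist_le {π : Measure Ω} [IsProbabilityMeasure π]
    {f g : Ω → ℝ} (hf : AEStronglyMeasurable f π) (hg : Integrable g π) {C : ℝ}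
    (h : ∀ ω, dist (f ω) (g ω) ≤ C) : dist (∫ ω, f ω ∂π) (∫ ω, g ω ∂π) ≤ C := by
  have hfg : Integrable (f - g) π :=
    (integrable_const C).mono' (hf.sub hg.aestronglyMeasurable)
      (ae_of_all _ fun ω => by simpa only [Pi.sub_apply, ← dist_eq_norm] using h ω)
  rw [dist_eq_norm, ← integral_sub (by simpa using hfg.add hg) hg]
  simpa using norm_integral_le_of_norm_le_const (μ := π)
    (ae_of_all _ fun ω => (dist_eq_norm (f ω) (g ω)).symm.trans_le (h ω))

lemma abs_integral_rpow_sub_integral_min_rpow_le {π : Measure Ω} [IsFiniteMeasure π]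
    {c : Ω → ℝ} (hc0 : ∀ ω, 0 ≤ c ω) (hc : Integrable c π) {n p : ℝ} (hn : 1 ≤ n) (hp : 0 < p)
    (hp1 : p ≤ 1) :
    |∫ ω, c ω ^ p ∂π - ∫ ω, min (c ω) n ^ p ∂π| ≤ ∫ ω, (Ioi n).indicator id (c ω) ∂π := by
  have hmin0 : ∀ ω, 0 ≤ min (c ω) n := fun ω => le_min (hc0 ω) (by linarith)
  have hint : Integrable (fun ω => c ω ^ p) π :=
    ((integrable_const 1).add hc).mono' (hc.aemeasurable.pow_const p).aestronglyMeasurable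
      (ae_of_all _ fun ω => by
        rw [Real.norm_of_nonneg (Real.rpow_nonneg (hc0 ω) p)]
        exact rpow_le_one_add (hc0 ω) hp.le hp1)
  have hint_min : Integrable (fun ω => min (c ω) n ^ p) π :=
    (integrable_const (n ^ p)).mono'
      ((hc.aemeasurable.min aemeasurable_const).pow_const p).aestronglyMeasurable
      (ae_of_all _ fun ω => by
        rw [Real.norm_of_nonneg (Real.rpow_nonneg (hmin0 ω) p)]
        exact Real.rpow_le_rpow (hmin0 ω) (min_le_right _ _) hp.le)
  have hle : ∀ ω, min (c ω) n ^ p ≤ c ω ^ p :=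
    fun ω => Real.rpow_le_rpow (hmin0 ω) (min_le_left _ _) hp.le
  rw [abs_of_nonneg (sub_nonneg.2 (integral_mono hint_min hint hle)),
    ← integral_sub hint hint_min]
  exact integral_mono_of_nonneg (ae_of_all _ fun ω => sub_nonneg.2 (hle ω))
    (hc.indicator_Ioi_id_comp n) (ae_of_all _ fun ω => rpow_sub_min_rpow_le_indicator hn hp1)

end Integrals

section Weak

variable {X Ω : Type*} [TopologicalSpace X] [TopologicalSpace Ω] [MeasurableSpace Ω]
  [OpensMeasurableSpace Ω]

lemma continuousWithinAt_integral_of_tendstoUniformly {F : X → Ω → ℝ} {s : Set X} {x₀ : X}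
    (f₀ : Ω →ᵇ ℝ) (hF₀ : F x₀ = f₀) (hmeas : ∀ x, Measurable (F x))
    (hF : TendstoUniformly F f₀ (𝓝[s] x₀)) (π₀ : ProbabilityMeasure Ω) :
    ContinuousWithinAt (fun q : X × ProbabilityMeasure Ω => ∫ ω, F q.1 ω ∂(q.2 : Measure Ω))
      (s ×ˢ univ) (x₀, π₀) := by
  rw [ContinuousWithinAt, Metric.tendsto_nhds, nhdsWithin_prod_eq, nhdsWithin_univ]
  intro ε hε
  have hπ : ∀ᶠ π : ProbabilityMeasure Ω in 𝓝 π₀,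
      dist (∫ ω, f₀ ω ∂(π : Measure Ω)) (∫ ω, f₀ ω ∂(π₀ : Measure Ω)) < ε / 2 :=
    Metric.tendsto_nhds.1
      ((ProbabilityMeasure.continuous_integral_boundedContinuousFunction f₀).tendsto π₀) _
      (half_pos hε)
  have hx := Metric.tendstoUniformly_iff.1 hF _ (half_pos hε)
  filter_upwards [hx.prod_mk hπ] with ⟨x, π⟩ ⟨hxω, hπ⟩
  rw [hF₀]
  calc dist (∫ ω, F x ω ∂(π : Measure Ω)) (∫ ω, f₀ ω ∂(π₀ : Measure Ω))
      ≤ dist (∫ ω, F x ω ∂(π : Measure Ω)) (∫ ω, f₀ ω ∂(π : Measure Ω)) +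
        dist (∫ ω, f₀ ω ∂(π : Measure Ω)) (∫ ω, f₀ ω ∂(π₀ : Measure Ω)) := dist_triangle _ _ _
    _ < ε / 2 + ε / 2 := add_lt_add_of_le_of_lt
      (dist_integral_le_of_forall_dist_le (hmeas x).aestronglyMeasurable (f₀.integrable _)
        fun ω => (dist_comm (F x ω) (f₀ ω)).trans_le (hxω ω).le) hπ
    _ = ε := add_halves ε

lemma continuousOn_integral_min_rpow {c : Ω → ℝ} (hc : Continuous c) (hc0 : ∀ ω, 0 ≤ c ω)
    {n : ℝ} (hn : 0 ≤ n) :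
    ContinuousOn (fun q : ℝ × ProbabilityMeasure Ω => ∫ ω, min (c ω) n ^ q.1 ∂(q.2 : Measure Ω))
      (Ioi 0 ×ˢ univ) := by
  rintro ⟨p₀, π₀⟩ ⟨hp₀, -⟩
  have hmin : ∀ ω, min (c ω) n ∈ Icc 0 n := fun ω => ⟨le_min (hc0 ω) hn, min_le_right _ _⟩
  let f₀ : Ω →ᵇ ℝ := .ofNormedAddCommGroup (fun ω => min (c ω) n ^ p₀)
    ((hc.min continuous_const).rpow_const fun _ => Or.inr (le_of_lt hp₀)) (n ^ p₀) fun ω => by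
      rw [Real.norm_of_nonneg (Real.rpow_nonneg (hmin ω).1 _)]
      exact Real.rpow_le_rpow (hmin ω).1 (hmin ω).2 (le_of_lt hp₀)
  refine continuousWithinAt_integral_of_tendstoUniformly (F := fun p ω => min (c ω) n ^ p)
    f₀ rfl (fun p => (hc.measurable.min measurable_const).pow_const p) ?_ π₀
  have := (tendstoUniformlyOn_rpow_Icc hp₀ n).comp (fun ω => min (c ω) n)
  rw [preimage_eq_univ_iff.2 (range_subset_iff.2 hmin), tendstoUniformlyOn_univ] at this
  exact fun u hu => nhdsWithin_le_nhds (this u hu)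

end Weak

def couplings {α β : Type*} [MeasurableSpace α] [MeasurableSpace β] (μ : Measure α)
    (ν : Measure β) : Set (ProbabilityMeasure (α × β)) :=
  {π | (π : Measure (α × β)).map Prod.fst = μ ∧ (π : Measure (α × β)).map Prod.snd = ν}

section Couplings

variable {π : Measure (ℝ × ℝ)} {μ ν : Measure ℝ}

lemma abs_sub_le_abs_add_abs (z : ℝ × ℝ) : |z.2 - z.1| ≤ |z.1| + |z.2| :=
  abs_sub_comm z.2 z.1 ▸ abs_sub z.1 z.2

lemma integrable_abs_sub_of_map_eq (h₁ : π.map Prod.fst = μ) (h₂ : π.map Prod.snd = ν)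
    (hμ : Integrable (fun x => |x|) μ) (hν : Integrable (fun y => |y|) ν) :
    Integrable (fun z : ℝ × ℝ => |z.2 - z.1|) π := by
  subst h₁ h₂
  exact ((hμ.comp_measurable measurable_fst).add (hν.comp_measurable measurable_snd)).mono'
    (by fun_prop) (ae_of_all _ fun z => by
      simpa only [Real.norm_eq_abs, abs_abs, Pi.add_apply, Function.comp_apply] using
        abs_sub_le_abs_add_abs z)

lemma integral_indicator_Ioi_abs_sub_le (h₁ : π.map Prod.fst = μ) (h₂ : π.map Prod.snd = ν)
    (hμ : Integrable (fun x => |x|) μ) (hν : Integrable (fun y => |y|) ν) (r : ℝ) :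
    ∫ z, (Ioi r).indicator id |z.2 - z.1| ∂π ≤
      2 * (∫ x, (Ioi (r / 2)).indicator id |x| ∂μ + ∫ y, (Ioi (r / 2)).indicator id |y| ∂ν) := by
  subst h₁ h₂
  have hμ' := hμ.indicator_Ioi_id_comp (r / 2)
  have hν' := hν.indicator_Ioi_id_comp (r / 2)
  have hfst : Integrable (fun z : ℝ × ℝ => (Ioi (r / 2)).indicator id |z.1|) π :=
    hμ'.comp_measurable measurable_fst
  have hsnd : Integrable (fun z : ℝ × ℝ => (Ioi (r / 2)).indicator id |z.2|) π :=
    hν'.comp_measurable measurable_snd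
  rw [integral_map measurable_fst.aemeasurable hμ'.aestronglyMeasurable,
    integral_map measurable_snd.aemeasurable hν'.aestronglyMeasurable,
    ← integral_add hfst hsnd, ← integral_const_mul]
  exact integral_mono_of_nonneg
    (ae_of_all _ fun z => indicator_nonneg (fun _ _ => abs_nonneg _) _)
    ((hfst.add hsnd).const_mul 2)
    (ae_of_all _ fun z =>
      indicator_Ioi_le_of_le_add r (abs_nonneg _) (abs_nonneg _) (abs_sub_le_abs_add_abs z))

theorem tendstoUniformlyOn_integral_min_rpow (hμ : Integrable (fun x => |x|) μ)
    (hν : Integrable (fun y => |y|) ν) :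
    TendstoUniformlyOn
      (fun n (q : ℝ × ProbabilityMeasure (ℝ × ℝ)) =>
        ∫ z : ℝ × ℝ, min |z.2 - z.1| n ^ q.1 ∂(q.2 : Measure (ℝ × ℝ)))
      (fun q => ∫ z : ℝ × ℝ, |z.2 - z.1| ^ q.1 ∂(q.2 : Measure (ℝ × ℝ)))
      atTop (Ioc 0 1 ×ˢ couplings μ ν) := by
  rw [Metric.tendstoUniformlyOn_iff]
  intro ε hε
  have htail : Tendsto (fun r : ℝ => 2 * (∫ x, (Ioi (r / 2)).indicator id |x| ∂μ +
      ∫ y, (Ioi (r / 2)).indicator id |y| ∂ν)) atTop (𝓝 0) := by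
    simpa only [add_zero, mul_zero, Function.comp_def, id] using
      (((tendsto_integral_indicator_Ioi_atTop hμ).add
        (tendsto_integral_indicator_Ioi_atTop hν)).const_mul 2).comp
        (tendsto_id.atTop_div_const two_pos)
  filter_upwards [htail.eventually (gt_mem_nhds hε), eventually_ge_atTop 1] with n hn hn1
  rintro ⟨p, π⟩ ⟨⟨hp, hp1⟩, h₁, h₂⟩
  rw [Real.dist_eq]
  exact ((abs_integral_rpow_sub_integral_min_rpow_le (fun _ => abs_nonneg _)
    (integrable_abs_sub_of_map_eq h₁ h₂ hμ hν) hn1 hp hp1).trans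
    (integral_indicator_Ioi_abs_sub_le h₁ h₂ hμ hν n)).trans_lt hn

end Couplings

/-- Joint continuity of `(p, π) ↦ T_p(π)` on `(0,1] × Marg(μ,ν)`, for
marginals with finite first moment. -/
theorem stmt_14 (μ ν : ProbabilityMeasure ℝ)
    (hμ : Integrable (fun x : ℝ => |x|) (μ : Measure ℝ))
    (hν : Integrable (fun x : ℝ => |x|) (ν : Measure ℝ)) :
    ContinuousOn
      (fun q : ℝ × ProbabilityMeasure (ℝ × ℝ) =>
        ∫ z : ℝ × ℝ, |z.2 - z.1| ^ q.1 ∂(q.2 : Measure (ℝ × ℝ)))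
      (Set.Ioc (0:ℝ) 1 ×ˢ
        {π : ProbabilityMeasure (ℝ × ℝ) |
          (π : Measure (ℝ × ℝ)).map Prod.fst = (μ : Measure ℝ) ∧
          (π : Measure (ℝ × ℝ)).map Prod.snd = (ν : Measure ℝ)}) := by
  refine (tendstoUniformlyOn_integral_min_rpow hμ hν).continuousOn
    (Eventually.frequently ((eventually_ge_atTop 0).mono fun n hn => ?_))
  exact (continuousOn_integral_min_rpow (by fun_prop) (fun _ => abs_nonneg _) hn).mono
    (prod_mono Ioc_subset_Ioi_self (subset_univ _))
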